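/- Let x ∈ Q(R) be dominant and let z ∈ Q(R) satisfy ⟨z, ϖ_i⟩ ≤ ⟨x, ϖ_i⟩ for all i ∈ I. Suppose i₁, …, i_k ∈ I are distinct indices such that ⟨z, α_{i₁}^∨⟩ = −1, ⟨z, α_{i_j}^∨⟩ = 0 for j = 2, …, k, and ⟨α_{i_j}, α_{i_{j+1}}^∨⟩ = −1 for j = 1, …, k−1. Then the strict inequality ⟨z, ϖ_{i_j}⟩ < ⟨x, ϖ_{i_j}⟩ holds for every j = 1, …, k. -/

import Mathlib

open Module

/-- An irreducible reduced (crystallographic) root system `R` in a real vector space `V`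
(playing the role of `Q(R) ⊗ ℝ`), together with a base of simple roots indexed by `ι`,
the coroot pairings `u ↦ ⟨u, α^∨⟩` realised as linear functionals, and the fundamental
coweights `ϖ_i`, characterised by `⟨ϖ_i, α_j⟩ = δ_{ij}`. -/
structure RootSystemData (ι : Type*) (V : Type*) [Fintype ι] [DecidableEq ι]
    [AddCommGroup V] [Module ℝ V] where
  /-- the set of roots `R` -/
  isRoot : Set V
  /-- the coroot pairing: `coroot a u = ⟨u, a^∨⟩` -/
  coroot : V → (V →ₗ[ℝ] ℝ)
  /-- the simple roots `α_i` -/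
  sroot : ι → V
  sroot_mem : ∀ i, sroot i ∈ isRoot
  coroot_self : ∀ a ∈ isRoot, coroot a a = 2
  crystallographic : ∀ a ∈ isRoot, ∀ b ∈ isRoot, ∃ n : ℤ, coroot a b = (n : ℝ)
  reflect_mem : ∀ a ∈ isRoot, ∀ b ∈ isRoot, b - coroot a b • a ∈ isRoot
  reduced : ∀ a ∈ isRoot, ∀ t : ℝ, t • a ∈ isRoot → t = 1 ∨ t = -1
  finite : isRoot.Finite
  ne_zero : ∀ a ∈ isRoot, a ≠ 0
  span_top : Submodule.span ℝ isRoot = ⊤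
  /-- every root is a nonnegative or nonpositive integral combination of the simple roots -/
  base : ∀ a ∈ isRoot, (∃ c : ι → ℕ, a = ∑ i, (c i : ℝ) • sroot i) ∨
    (∃ c : ι → ℕ, a = -∑ i, (c i : ℝ) • sroot i)
  /-- the root system is irreducible -/
  irreducible : ∀ s t : Set V, isRoot = s ∪ t →
    (∀ a ∈ s, ∀ b ∈ t, coroot a b = 0) → s = ∅ ∨ t = ∅
  /-- the fundamental coweights `ϖ_i`, as linear functionals `u ↦ ⟨u, ϖ_i⟩` -/
  coweight : ι → (V →ₗ[ℝ] ℝ)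
  coweight_sroot : ∀ i j, coweight i (sroot j) = if i = j then 1 else 0

namespace RootSystemData

variable {ι V : Type*} [Fintype ι] [DecidableEq ι] [AddCommGroup V] [Module ℝ V]
variable (P : RootSystemData ι V)

/-- The root lattice `Q(R)`, i.e. the `ℤ`-span of the roots. -/
def rootLattice : AddSubgroup V := AddSubgroup.closure P.isRoot

/-- The Weyl group `W`, generated by the reflections in the roots. -/
def weylGroup : Subgroup (V ≃ₗ[ℝ] V) :=
  Subgroup.closure { w | ∃ a, ∃ ha : a ∈ P.isRoot, w = Module.reflection (P.coroot_self a ha) }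

/-- The Weyl orbit `O_x = {wx : w ∈ W}` of an element `x`. -/
def orbit (x : V) : Set V := { v | ∃ w ∈ P.weylGroup, v = w x }

/-- An element `u` is dominant if `⟨u, α_i^∨⟩ ≥ 0` for all `i ∈ I`. -/
def IsDominant (u : V) : Prop := ∀ i, 0 ≤ P.coroot (P.sroot i) u

/-- The simple reflection `s_{α_i}`. -/
def sref (i : ι) : V ≃ₗ[ℝ] V :=
  Module.reflection (P.coroot_self (P.sroot i) (P.sroot_mem i))

end RootSystemData

/-!
Put `v = x - z`. Its coordinates `⟨v, ϖ_i⟩` in the basis of simple roots are nonnegative, and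
`⟨v, α_a^∨⟩ = ∑_m ⟨v, ϖ_m⟩ ⟨α_m, α_a^∨⟩`. Since off-diagonal Cartan entries are nonpositive, a
vanishing coordinate `⟨v, ϖ_a⟩ = 0` forces `⟨v, α_a^∨⟩ ≤ ⟨v, ϖ_b⟩ ⟨α_b, α_a^∨⟩` for every `b ≠ a`,
and `⟨v, α_a^∨⟩ ≤ 0`. Dominance of `x` gives `⟨v, α_{i₁}^∨⟩ ≥ 1` and `⟨v, α_{i_j}^∨⟩ ≥ 0`, so the
coordinates along the chain are positive by induction on `j`.
-/

namespace RootSystemData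

variable {ι V : Type*} [Fintype ι] [DecidableEq ι] [AddCommGroup V] [Module ℝ V]
variable (P : RootSystemData ι V)

theorem coweight_sum_smul_sroot (c : ι → ℝ) (i : ι) :
    P.coweight i (∑ j, c j • P.sroot j) = c i := by
  simp [map_sum, P.coweight_sroot]

theorem coweight_nonneg_or_nonpos {a : V} (ha : a ∈ P.isRoot) :
    (∀ i, 0 ≤ P.coweight i a) ∨ (∀ i, P.coweight i a ≤ 0) := by
  rcases P.base a ha with ⟨c, rfl⟩ | ⟨c, rfl⟩
  · exact .inl fun i => by rw [P.coweight_sum_smul_sroot (fun j => (c j : ℝ))]; positivity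
  · exact .inr fun i => by
      rw [map_neg, P.coweight_sum_smul_sroot (fun j => (c j : ℝ)), neg_nonpos]; positivity

theorem span_sroot_eq_top : Submodule.span ℝ (Set.range P.sroot) = ⊤ := by
  refine eq_top_iff.2 (P.span_top ▸ Submodule.span_le.2 fun a ha => ?_)
  rcases P.base a ha with ⟨c, rfl⟩ | ⟨c, rfl⟩ <;>
  [skip; refine Submodule.neg_mem _ ?_] <;>
  exact Submodule.sum_mem _ fun i _ => Submodule.smul_mem _ _ (Submodule.subset_span ⟨i, rfl⟩)

theorem sum_coweight_smul_sroot (v : V) : ∑ i, P.coweight i v • P.sroot i = v := by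
  have h : ∑ i, (P.coweight i).smulRight (P.sroot i) = LinearMap.id :=
    LinearMap.ext_on_range P.span_sroot_eq_top fun j => by
      simp [LinearMap.sum_apply, P.coweight_sroot]
  simpa [LinearMap.sum_apply] using LinearMap.congr_fun h v

theorem coroot_sroot_eq_sum (a : ι) (v : V) :
    P.coroot (P.sroot a) v = ∑ m, P.coweight m v * P.coroot (P.sroot a) (P.sroot m) := by
  conv_lhs => rw [← P.sum_coweight_smul_sroot v]
  simp [map_sum]

/-- The root `s_j α_i = α_i - ⟨α_i, α_j^∨⟩ α_j` has `ϖ_i`-coordinate `1`, so its `ϖ_j`-coordinate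
is nonnegative. -/
theorem coroot_sroot_nonpos_of_ne {i j : ι} (hij : i ≠ j) :
    P.coroot (P.sroot j) (P.sroot i) ≤ 0 := by
  have hroot := P.reflect_mem _ (P.sroot_mem j) _ (P.sroot_mem i)
  rcases P.coweight_nonneg_or_nonpos hroot with h | h
  · simpa [P.coweight_sroot, Ne.symm hij] using h j
  · exact absurd (h i) (by simp [P.coweight_sroot, hij])

variable {P}

theorem coroot_sroot_le_sum_of_coweight_eq_zero {v : V} (hv : ∀ i, 0 ≤ P.coweight i v)
    {a : ι} (ha : P.coweight a v = 0) {s : Finset ι} (hs : a ∉ s) :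
    P.coroot (P.sroot a) v ≤ ∑ m ∈ s, P.coweight m v * P.coroot (P.sroot a) (P.sroot m) := by
  rw [P.coroot_sroot_eq_sum, ← Finset.sum_sdiff (Finset.subset_univ s)]
  refine add_le_of_nonpos_left (Finset.sum_nonpos fun m _ => ?_)
  obtain rfl | hma := eq_or_ne m a
  · simp [ha]
  · exact mul_nonpos_of_nonneg_of_nonpos (hv m) (P.coroot_sroot_nonpos_of_ne hma)

theorem coweight_pos_of_coroot_sroot_pos {v : V} (hv : ∀ i, 0 ≤ P.coweight i v) {a : ι}
    (hva : 0 < P.coroot (P.sroot a) v) : 0 < P.coweight a v := by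
  refine (hv a).lt_of_ne' fun ha => ?_
  have := coroot_sroot_le_sum_of_coweight_eq_zero hv ha (Finset.notMem_empty a)
  simp only [Finset.sum_empty] at this
  linarith

theorem coweight_pos_of_coweight_pos_of_coroot_sroot_neg {v : V}
    (hv : ∀ i, 0 ≤ P.coweight i v) {a b : ι}
    (hva : 0 ≤ P.coroot (P.sroot a) v) (hab : P.coroot (P.sroot a) (P.sroot b) < 0)
    (hvb : 0 < P.coweight b v) : 0 < P.coweight a v := by
  have hba : b ≠ a := by
    rintro rfl
    linarith [P.coroot_self _ (P.sroot_mem b)]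
  refine (hv a).lt_of_ne' fun ha => ?_
  have := coroot_sroot_le_sum_of_coweight_eq_zero hv ha (Finset.notMem_singleton.2 hba.symm)
  rw [Finset.sum_singleton] at this
  nlinarith

end RootSystemData

theorem statement11_general {ι V : Type*} [Fintype ι] [DecidableEq ι] [AddCommGroup V] [Module ℝ V]
    (P : RootSystemData ι V) (x z : V)
    (hxdom : P.IsDominant x)
    (hzx : ∀ i, P.coweight i z ≤ P.coweight i x)
    (k : ℕ) (hk : 0 < k) (ind : Fin k → ι)
    (hb : P.coroot (P.sroot (ind ⟨0, hk⟩)) z = -1)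
    (hc : ∀ j : Fin k, 0 < j.1 → P.coroot (P.sroot (ind j)) z = 0)
    (hd : ∀ j : ℕ, ∀ hj : j + 1 < k,
      P.coroot (P.sroot (ind ⟨j + 1, hj⟩)) (P.sroot (ind ⟨j, Nat.lt_of_succ_lt hj⟩)) = -1) :
    ∀ j : Fin k, P.coweight (ind j) z < P.coweight (ind j) x := by
  have hv : ∀ i, 0 ≤ P.coweight i (x - z) := fun i => by simpa using hzx i
  suffices h : ∀ (n : ℕ) (hn : n < k), 0 < P.coweight (ind ⟨n, hn⟩) (x - z) from
    fun j => by simpa using h j.1 j.2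
  intro n
  induction n with
  | zero =>
    refine fun hn => RootSystemData.coweight_pos_of_coroot_sroot_pos hv ?_
    simpa [hb] using add_pos_of_nonneg_of_pos (hxdom (ind ⟨0, hn⟩)) one_pos
  | succ n ih =>
    refine fun hn => RootSystemData.coweight_pos_of_coweight_pos_of_coroot_sroot_neg hv ?_
      (by simp [hd n hn]) (ih (Nat.lt_of_succ_lt hn))
    simpa [hc ⟨n + 1, hn⟩ n.succ_pos] using hxdom (ind ⟨n + 1, hn⟩)

/-- Let `x ∈ Q(R)` be dominant and let `z ∈ Q(R)` satisfy
`⟨z, ϖ_i⟩ ≤ ⟨x, ϖ_i⟩` for all `i ∈ I`. Suppose `i₁, …, i_k ∈ I` are distinct indices such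
that `⟨z, α_{i₁}^∨⟩ = −1`, `⟨z, α_{i_j}^∨⟩ = 0` for `j = 2, …, k`, and
`⟨α_{i_j}, α_{i_{j+1}}^∨⟩ = −1` for `j = 1, …, k−1`. Then the strict inequality
`⟨z, ϖ_{i_j}⟩ < ⟨x, ϖ_{i_j}⟩` holds for every `j = 1, …, k`. -/
theorem statement11 {ι V : Type*} [Fintype ι] [DecidableEq ι] [AddCommGroup V] [Module ℝ V]
    (P : RootSystemData ι V) (x z : V)
    (hx : x ∈ P.rootLattice) (hxdom : P.IsDominant x)
    (hzQ : z ∈ P.rootLattice)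
    (hzx : ∀ i, P.coweight i z ≤ P.coweight i x)
    (k : ℕ) (hk : 0 < k) (ind : Fin k → ι) (hinj : Function.Injective ind)
    (hb : P.coroot (P.sroot (ind ⟨0, hk⟩)) z = -1)
    (hc : ∀ j : Fin k, 0 < j.1 → P.coroot (P.sroot (ind j)) z = 0)
    (hd : ∀ j : ℕ, ∀ hj : j + 1 < k,
      P.coroot (P.sroot (ind ⟨j + 1, hj⟩)) (P.sroot (ind ⟨j, Nat.lt_of_succ_lt hj⟩)) = -1) :
    ∀ j : Fin k, P.coweight (ind j) z < P.coweight (ind j) x :=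
  statement11_general P x z hxdom hzx k hk ind hb hc hd
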